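/- arXiv:1711.04355 — 2 statements merged into one kernel-verified Lean document; each statement's English description precedes it below -/
import Mathlib

section
/- Let x be a vertex in a hierarchically partitioned graph at level i, let C be a set of Δ+1 colors, and let χ be an assignment of colors to the neighbors of x. Let N_low denote the set of neighbors of x at levels strictly below i, and N_high the set of neighbors at levels ≥ i. Suppose |N_low| + |N_high| ≤ Δ. Let C_x = C minus the colors used by N_high. Then the number of colors in C_x used by at most one vertex of N_low is at least 1 + |N_low|/2. -/
/-- In a hierarchically partitioned graph with palette `C` of `Δ+1` colors,
for a vertex `x` at level `lvl x`, letting `N_low` be the neighbors at strictly lower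
levels and `N_high` the neighbors at levels `≥ lvl x`, with `|N_low| + |N_high| ≤ Δ`,
the number of colors of `C \ χ(N_high)` used by at most one vertex of `N_low` is at
least `1 + |N_low|/2`. -/
theorem stmt1 {V α : Type*} [Fintype V] [DecidableEq V] [DecidableEq α]
    (G : SimpleGraph V) [DecidableRel G.Adj] (Δ : ℕ)
    (lvl : V → ℕ) (C : Finset α) (hC : C.card = Δ + 1) (χ : V → α) (x : V)
    (hdeg : ((G.neighborFinset x).filter (fun u => lvl u < lvl x)).card
          + ((G.neighborFinset x).filter (fun u => lvl x ≤ lvl u)).card ≤ Δ) :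
    (1 : ℝ) + (((G.neighborFinset x).filter (fun u => lvl u < lvl x)).card : ℝ) / 2 ≤
      ((((C \ (((G.neighborFinset x).filter (fun u => lvl x ≤ lvl u)).image χ)).filter
        (fun c => (((G.neighborFinset x).filter (fun u => lvl u < lvl x)).filter
          (fun u => χ u = c)).card ≤ 1)).card : ℝ)) := by
  set L := (G.neighborFinset x).filter (fun u => lvl u < lvl x) with hL
  set H := (G.neighborFinset x).filter (fun u => lvl x ≤ lvl u) with hH
  set Cx := C \ (H.image χ) with hCx
  set good := Cx.filter (fun c => (L.filter (fun u => χ u = c)).card ≤ 1) with hgood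
  set bad := Cx.filter (fun c => ¬ (L.filter (fun u => χ u = c)).card ≤ 1) with hbad
  -- bad ⊆ L.image χ
  have hbadsub : bad ⊆ L.image χ := by
    intro c hc
    rw [hbad, Finset.mem_filter] at hc
    have h2 : 2 ≤ (L.filter (fun u => χ u = c)).card := by omega
    have hpos : 0 < (L.filter (fun u => χ u = c)).card := by omega
    obtain ⟨u, hu⟩ := Finset.card_pos.mp hpos
    rw [Finset.mem_filter] at hu
    exact Finset.mem_image.mpr ⟨u, hu.1, hu.2⟩
  -- 2 * bad.card ≤ L.card
  have hsum : L.card = ∑ c ∈ L.image χ, (L.filter (fun u => χ u = c)).card :=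
    Finset.card_eq_sum_card_fiberwise (fun u hu => Finset.mem_image_of_mem χ hu)
  have h2bad : 2 * bad.card ≤ L.card := by
    calc 2 * bad.card = ∑ _c ∈ bad, 2 := by rw [Finset.sum_const]; ring
    _ ≤ ∑ c ∈ bad, (L.filter (fun u => χ u = c)).card := by
        apply Finset.sum_le_sum
        intro c hc
        rw [hbad, Finset.mem_filter] at hc
        omega
    _ ≤ ∑ c ∈ L.image χ, (L.filter (fun u => χ u = c)).card :=
        Finset.sum_le_sum_of_subset hbadsub
    _ = L.card := hsum.symm
  -- Cx.card ≥ L.card + 1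
  have hCxcard : L.card + 1 ≤ Cx.card := by
    have h1 : C.card ≤ Cx.card + (H.image χ).card := Finset.card_le_card_sdiff_add_card
    have h2 : (H.image χ).card ≤ H.card := Finset.card_image_le
    omega
  -- good + bad = Cx
  have hsplit : good.card + bad.card = Cx.card := Finset.card_filter_add_card_filter_not _
  have hkey : L.card + 2 ≤ 2 * good.card := by omega
  have : (L.card : ℝ) + 2 ≤ 2 * (good.card : ℝ) := by exact_mod_cast hkey
  linarith
end

section
/- The maximal independent set problem is not locally fixable: there exists a graph G on 2Δ vertices and a feasible MIS solution such that after inserting a single edge, every feasible solution of the new graph differs from the old one in at least Δ vertices' states. -/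
/-!
Take two stars with centers `u`, `v` and `Δ - 1` leaves each; the two centers form a maximal
independent set. Once `u` and `v` are joined, every maximal independent set leaves out one of
them, say `u`. Each leaf of `u` then has no chosen neighbour, so it must be chosen: the `Δ`
vertices of the star of `u` all change state.
-/

open Finset

variable {V : Type*}

def IsMISSolution (G : SimpleGraph V) (s : V → Bool) : Prop :=
  (∀ a b, G.Adj a b → ¬(s a = true ∧ s b = true)) ∧
    (∀ a, (∀ b, G.Adj a b → s b = false) → s a = true)

namespace SimpleGraph

/-- For a retraction `c`, the disjoint union of stars centered at the fixed points of `c`, each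
other vertex `w` being a leaf attached to `c w`. -/
def starForest (c : V → V) : SimpleGraph V where
  Adj a b := a ≠ b ∧ (a = c b ∨ b = c a)
  symm := ⟨fun _ _ h => ⟨h.1.symm, h.2.symm⟩⟩
  loopless := ⟨fun _ h => h.1 rfl⟩

variable {c : V → V}

theorem not_starForest_adj_of_fixed {a b : V} (ha : c a = a) (hb : c b = b) :
    ¬(starForest c).Adj a b := by
  rintro ⟨hne, h | h⟩
  · exact hne (h.trans hb)
  · exact hne (ha ▸ h).symm

theorem starForest_adj_iff_of_ne (hc : ∀ x, c (c x) = c x) {w : V} (hw : c w ≠ w) (b : V) :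
    (starForest c).Adj w b ↔ b = c w := by
  constructor
  · rintro ⟨-, h | h⟩
    · exact absurd (h ▸ hc b) hw
    · exact h
  · rintro rfl
    exact ⟨hw.symm, Or.inr rfl⟩

theorem isMISSolution_starForest (hc : ∀ x, c (c x) = c x) [DecidableEq V] :
    IsMISSolution (starForest c) (fun x => decide (c x = x)) := by
  refine ⟨fun a b hab ⟨ha, hb⟩ => ?_, fun a ha => ?_⟩
  · exact not_starForest_adj_of_fixed (of_decide_eq_true ha) (of_decide_eq_true hb) hab
  · by_contra hna
    have hw : c a ≠ a := by simpa using hna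
    have := ha (c a) ((starForest_adj_iff_of_ne hc hw _).2 rfl)
    simp [hc a] at this

theorem starForest_sup_edge_adj_iff_of_ne (hc : ∀ x, c (c x) = c x) {u v w : V}
    (hu : c u = u) (hv : c v = v) (hw : c w ≠ w) (b : V) :
    (starForest c ⊔ fromEdgeSet {s(u, v)}).Adj w b ↔ b = c w := by
  rw [sup_adj, starForest_adj_iff_of_ne hc hw, or_iff_left_iff_imp]
  intro h
  rw [fromEdgeSet_adj, Set.mem_singleton_iff, Sym2.eq_iff] at h
  rcases h.1 with ⟨rfl, -⟩ | ⟨rfl, -⟩ <;> contradiction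

theorem fiber_subset_filter_ne [Fintype V] [DecidableEq V] (hc : ∀ x, c (c x) = c x)
    {u v z : V} (hu : c u = u) (hv : c v = v) (hz : c z = z) {s : V → Bool}
    (hs : IsMISSolution (starForest c ⊔ fromEdgeSet {s(u, v)}) s) (hsz : s z = false) :
    univ.filter (c · = z) ⊆ univ.filter fun w => decide (c w = w) ≠ s w := by
  intro w
  simp only [mem_filter, mem_univ, true_and]
  rintro rfl
  by_cases hw : c w = w
  · rw [hw] at hsz ⊢
    simp [hsz]
  · have : s w = true := hs.2 w fun b hb =>
      (starForest_sup_edge_adj_iff_of_ne hc hu hv hw b).1 hb ▸ hsz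
    simp [hw, this]

theorem min_card_fiber_le_card_filter_ne [Fintype V] [DecidableEq V] (hc : ∀ x, c (c x) = c x)
    {u v : V} (huv : u ≠ v) (hu : c u = u) (hv : c v = v) {s : V → Bool}
    (hs : IsMISSolution (starForest c ⊔ fromEdgeSet {s(u, v)}) s) :
    min #{w | c w = u} #{w | c w = v} ≤ #{w | decide (c w = w) ≠ s w} := by
  have huv' : (starForest c ⊔ fromEdgeSet {s(u, v)}).Adj u v := Or.inr (by simp [huv])
  cases hsu : s u
  · exact (min_le_left _ _).trans (card_le_card (fiber_subset_filter_ne hc hu hv hu hs hsu))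
  · have hsv : s v = false := by simpa [hsu] using hs.1 u v huv'
    exact (min_le_right _ _).trans (card_le_card (fiber_subset_filter_ne hc hu hv hv hs hsv))

end SimpleGraph

def twoStarCenter (Δ : ℕ) (i : Fin (2 * Δ)) : Fin (2 * Δ) :=
  ⟨if (i : ℕ) < Δ then 0 else Δ, by split_ifs <;> omega⟩

theorem twoStarCenter_twoStarCenter (Δ : ℕ) (i : Fin (2 * Δ)) :
    twoStarCenter Δ (twoStarCenter Δ i) = twoStarCenter Δ i := by
  ext; simp only [twoStarCenter]; split_ifs <;> simp_all

theorem twoStarCenter_eq_twoStarCenter_iff {Δ : ℕ} (hΔ : 0 < Δ) (i j : Fin (2 * Δ)) :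
    twoStarCenter Δ i = twoStarCenter Δ j ↔ ((i : ℕ) < Δ ↔ (j : ℕ) < Δ) := by
  simp only [twoStarCenter, Fin.ext_iff]
  split_ifs <;> simp_all <;> omega

theorem card_fiber_twoStarCenter {Δ : ℕ} (hΔ : 0 < Δ) (i : Fin (2 * Δ)) :
    #{w | twoStarCenter Δ w = twoStarCenter Δ i} = Δ := by
  simp_rw [twoStarCenter_eq_twoStarCenter_iff hΔ]
  have hlt : #{w : Fin (2 * Δ) | (w : ℕ) < Δ} = Δ := by
    rw [Fin.card_filter_val_lt]; omega
  by_cases hi : (i : ℕ) < Δ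
  · simpa [hi] using hlt
  · have := card_filter_add_card_filter_not (s := univ) fun w : Fin (2 * Δ) => (w : ℕ) < Δ
    simp only [card_univ, Fintype.card_fin] at this
    simp only [hi, iff_false]
    omega

/-- Maximal independent set is not locally fixable: there is a graph on
`2Δ` vertices and a feasible MIS solution such that after inserting one edge, every
feasible MIS solution of the new graph differs from the old one in at least `Δ`
vertices' states. -/
theorem stmt17 (Δ : ℕ) (hΔ : 2 ≤ Δ) :
    ∃ (G : SimpleGraph (Fin (2 * Δ))) (sol : Fin (2 * Δ) → Bool) (u v : Fin (2 * Δ)),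
      u ≠ v ∧ ¬ G.Adj u v ∧
      (∀ a b, G.Adj a b → ¬(sol a = true ∧ sol b = true)) ∧
      (∀ a, (∀ b, G.Adj a b → sol b = false) → sol a = true) ∧
      (∀ sol' : Fin (2 * Δ) → Bool,
        (∀ a b, (G ⊔ SimpleGraph.fromEdgeSet {s(u, v)}).Adj a b →
          ¬(sol' a = true ∧ sol' b = true)) →
        (∀ a, (∀ b, (G ⊔ SimpleGraph.fromEdgeSet {s(u, v)}).Adj a b → sol' b = false) →
          sol' a = true) →
        Δ ≤ (Finset.univ.filter (fun w => sol w ≠ sol' w)).card) := by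
  set c := twoStarCenter Δ
  have hc : ∀ x, c (c x) = c x := twoStarCenter_twoStarCenter Δ
  let u : Fin (2 * Δ) := ⟨0, by omega⟩
  let v : Fin (2 * Δ) := ⟨Δ, by omega⟩
  have hu : c u = u := by ext; simp [c, u, twoStarCenter]
  have hv : c v = v := by ext; simp [c, v, twoStarCenter]
  have huv : u ≠ v := by simp [u, v, Fin.ext_iff]; omega
  obtain ⟨hind, hdom⟩ := SimpleGraph.isMISSolution_starForest hc
  refine ⟨SimpleGraph.starForest c, fun x => decide (c x = x), u, v, huv,
    SimpleGraph.not_starForest_adj_of_fixed hu hv, hind, hdom, fun s hind' hdom' => ?_⟩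
  have hmin := SimpleGraph.min_card_fiber_le_card_filter_ne hc huv hu hv ⟨hind', hdom'⟩
  rwa [← hu, ← hv, card_fiber_twoStarCenter (by omega), card_fiber_twoStarCenter (by omega),
    min_self] at hmin
end
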